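/- arXiv:2408.04882 — 3 statements merged into one kernel-verified Lean document; each statement's English description precedes it below -/
import Mathlib

section
/- Let χ₂ ∈ (0, 1) and T∘ ≥ 0, let I ⊆ ℝ be an interval, let E ⊆ I be an arbitrary subset, and let a, b : I → ℝ be differentiable functions with a(t) ≥ 0 and b(t) ∈ [0, T∘] for all t ∈ I. Suppose that for every t ∈ E one has a′(t) ≤ 0 and b′(t) ≤ −(1 − χ₂), and for every t ∈ I \ E one has a′(t) ≤ −a(t) and b′(t) ≤ χ₂. Then for all s, t ∈ I with s ≤ t, a(t) ≤ e^{T∘} · e^{−(1 − χ₂)(t − s)} · a(s). -/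
/-! The weight `e^{b(t) + (1 - χ₂) t}` is chosen so that `(a e^{b + (1 - χ₂) t})' ≤ 0` on both
`E` and `I \ E`: on `E` the decrease of `b` pays for the growth of the exponent, off `E` the
decay `a' ≤ -a` does. So `a e^{b + (1 - χ₂) t}` is antitone on `I`, and since `b` ranges over
`[0, T₀]`, dividing out the weight costs at most a factor `e^{T₀}`. -/

open Real

theorem antitoneOn_mul_exp_of_deriv_add_mul_deriv_nonpos {I : Set ℝ} (hI : I.OrdConnected)
    {f g : ℝ → ℝ} (hf : ∀ t ∈ I, DifferentiableAt ℝ f t) (hg : ∀ t ∈ I, DifferentiableAt ℝ g t)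
    (hfg : ∀ t ∈ I, deriv f t + f t * deriv g t ≤ 0) :
    AntitoneOn (fun t => f t * exp (g t)) I := by
  have hderiv : ∀ t ∈ I, HasDerivAt (fun t => f t * exp (g t))
      ((deriv f t + f t * deriv g t) * exp (g t)) t := fun t ht =>
    ((hf t ht).hasDerivAt.mul (hg t ht).hasDerivAt.exp).congr_deriv (by ring)
  refine antitoneOn_of_hasDerivWithinAt_nonpos hI.convex
    (fun t ht => (hderiv t ht).continuousAt.continuousWithinAt)
    (fun t ht => (hderiv t (interior_subset ht)).hasDerivWithinAt) fun t ht => ?_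
  exact mul_nonpos_of_nonpos_of_nonneg (hfg t (interior_subset ht)) (exp_pos _).le

theorem le_exp_sub_mul_of_mul_exp_le {x y u v : ℝ} (h : x * exp u ≤ y * exp v) :
    x ≤ exp (v - u) * y := by
  rw [exp_sub, div_mul_eq_mul_div, le_div_iff₀ (exp_pos u)]
  linarith

theorem monitored_lyapunov_exponential_bound_general (χ₂ T₀ : ℝ)
    (I : Set ℝ) (hI : I.OrdConnected) (E : Set ℝ)
    (a b : ℝ → ℝ)
    (ha : ∀ t ∈ I, DifferentiableAt ℝ a t)
    (hb : ∀ t ∈ I, DifferentiableAt ℝ b t)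
    (ha0 : ∀ t ∈ I, 0 ≤ a t)
    (hb0 : ∀ t ∈ I, b t ∈ Set.Icc (0 : ℝ) T₀)
    (haE : ∀ t ∈ E, deriv a t ≤ 0)
    (hbE : ∀ t ∈ E, deriv b t ≤ -(1 - χ₂))
    (haI : ∀ t ∈ I \ E, deriv a t ≤ -a t)
    (hbI : ∀ t ∈ I \ E, deriv b t ≤ χ₂) :
    ∀ s ∈ I, ∀ t ∈ I, s ≤ t →
      a t ≤ Real.exp T₀ * Real.exp (-(1 - χ₂) * (t - s)) * a s := by
  have hweight : ∀ t ∈ I, HasDerivAt (fun t => b t + (1 - χ₂) * t) (deriv b t + (1 - χ₂)) t :=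
    fun t ht => ((hb t ht).hasDerivAt.add ((hasDerivAt_id' t).const_mul _)).congr_deriv (by ring)
  have hanti := antitoneOn_mul_exp_of_deriv_add_mul_deriv_nonpos hI ha
    (fun t ht => (hweight t ht).differentiableAt) fun t ht => by
    rw [(hweight t ht).deriv]
    by_cases htE : t ∈ E
    · nlinarith [haE t htE, hbE t htE, ha0 t ht]
    · nlinarith [haI t ⟨ht, htE⟩, hbI t ⟨ht, htE⟩, ha0 t ht]
  intro s hs t ht hst
  obtain ⟨-, hbs⟩ := hb0 s hs
  obtain ⟨hbt, -⟩ := hb0 t ht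
  calc a t ≤ exp (b s + (1 - χ₂) * s - (b t + (1 - χ₂) * t)) * a s :=
        le_exp_sub_mul_of_mul_exp_le (hanti hs ht hst)
    _ ≤ exp (T₀ + -(1 - χ₂) * (t - s)) * a s := by
        gcongr
        · exact ha0 s hs
        · linarith
    _ = exp T₀ * exp (-(1 - χ₂) * (t - s)) * a s := by rw [exp_add]

/-- The exponential decay bound extracted from the proof of Proposition 1: `a` plays the role of
the Lyapunov function `V̂` along a flow, `b` plays the role of the monitor state `θ_{r+2}` which
remains in `[0, T∘]`, and `E` is the set of times at which the unknown control direction lies in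
the bad set `ℰ_b`. Then `a(t) ≤ e^{T∘} e^{-(1 - χ₂)(t - s)} a(s)` for `s ≤ t` in `I`. -/
theorem monitored_lyapunov_exponential_bound (χ₂ T₀ : ℝ)
    (hχ : χ₂ ∈ Set.Ioo (0 : ℝ) 1) (hT₀ : 0 ≤ T₀)
    (I : Set ℝ) (hI : I.OrdConnected) (E : Set ℝ) (hE : E ⊆ I)
    (a b : ℝ → ℝ)
    (ha : ∀ t ∈ I, DifferentiableAt ℝ a t)
    (hb : ∀ t ∈ I, DifferentiableAt ℝ b t)
    (ha0 : ∀ t ∈ I, 0 ≤ a t)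
    (hb0 : ∀ t ∈ I, b t ∈ Set.Icc (0 : ℝ) T₀)
    (haE : ∀ t ∈ E, deriv a t ≤ 0)
    (hbE : ∀ t ∈ E, deriv b t ≤ -(1 - χ₂))
    (haI : ∀ t ∈ I \ E, deriv a t ≤ -a t)
    (hbI : ∀ t ∈ I \ E, deriv b t ≤ χ₂) :
    ∀ s ∈ I, ∀ t ∈ I, s ≤ t →
      a t ≤ Real.exp T₀ * Real.exp (-(1 - χ₂) * (t - s)) * a s :=
  monitored_lyapunov_exponential_bound_general χ₂ T₀ I hI E a b ha hb ha0 hb0 haE hbE haI hbI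
end

section
/- Let S denote the 2×2 real matrix with first row (0, 1) and second row (−1, 0). Let γ > 0, let ϑ⋆ ∈ ℝ² with ‖ϑ⋆‖ = 1, let I ⊆ ℝ be an interval, and let p : I → ℝ² be differentiable with ‖p(t)‖ = 1 and p′(t) = γ ⟨ϑ⋆, S p(t)⟩ · S p(t) for all t ∈ I. Then w(t) := 1 − ⟨ϑ⋆, p(t)⟩ satisfies w′(t) = −γ · w(t) · (2 − w(t)) for all t ∈ I. -/
/-! The rotation `S` turns `p` into the other vector of an orthogonal frame of the plane, so
`⟨ϑ⋆, Sp⟩² + ⟨ϑ⋆, p⟩² = ‖ϑ⋆‖²‖p‖² = 1`. Hence `Ẇ = -⟨ϑ⋆, ṗ⟩ = -γ⟨ϑ⋆, Sp⟩² = -γ(1 - (1 - W)²)`,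
which is `-γ W (2 - W)`. -/

/-- The 2×2 rotation generator with first row `(0, 1)` and second row `(-1, 0)`. -/
noncomputable def Smat : Matrix (Fin 2) (Fin 2) ℝ := !![0, 1; -1, 0]

open RealInnerProductSpace

lemma EuclideanSpace.inner_fin_two (a b : EuclideanSpace ℝ (Fin 2)) :
    ⟪a, b⟫ = a 0 * b 0 + a 1 * b 1 := by
  simp only [PiLp.inner_apply, RCLike.inner_apply, Real.ringHom_apply, Fin.sum_univ_two]
  ring

lemma inner_toEuclideanLin_Smat (a b : EuclideanSpace ℝ (Fin 2)) :
    ⟪a, Matrix.toEuclideanLin Smat b⟫ = a 0 * b 1 - a 1 * b 0 := by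
  rw [EuclideanSpace.inner_fin_two]
  simp [Smat, Matrix.toLpLin_apply, Matrix.vecHead, Matrix.vecTail, sub_eq_add_neg]

lemma EuclideanSpace.norm_sq_fin_two (a : EuclideanSpace ℝ (Fin 2)) :
    ‖a‖ ^ 2 = a 0 ^ 2 + a 1 ^ 2 := by
  rw [← real_inner_self_eq_norm_sq, EuclideanSpace.inner_fin_two]
  ring

lemma inner_toEuclideanLin_Smat_sq_add_inner_sq (a b : EuclideanSpace ℝ (Fin 2)) :
    ⟪a, Matrix.toEuclideanLin Smat b⟫ ^ 2 + ⟪a, b⟫ ^ 2 = ‖a‖ ^ 2 * ‖b‖ ^ 2 := by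
  rw [inner_toEuclideanLin_Smat, EuclideanSpace.inner_fin_two, EuclideanSpace.norm_sq_fin_two,
    EuclideanSpace.norm_sq_fin_two]
  ring

open RealInnerProductSpace in
theorem circle_averaged_flow_potential_ode_general (γ : ℝ)
    (θs : EuclideanSpace ℝ (Fin 2)) (hθs : ‖θs‖ = 1)
    (I : Set ℝ)
    (p : ℝ → EuclideanSpace ℝ (Fin 2))
    (hp1 : ∀ t ∈ I, ‖p t‖ = 1)
    (hp2 : ∀ t ∈ I, HasDerivAt p
      ((γ * ⟪θs, Matrix.toEuclideanLin Smat (p t)⟫) • Matrix.toEuclideanLin Smat (p t)) t)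
    (w : ℝ → ℝ) (hw : ∀ t, w t = 1 - ⟪θs, p t⟫) :
    ∀ t ∈ I, HasDerivAt w (-γ * w t * (2 - w t)) t := by
  intro t ht
  have hframe := inner_toEuclideanLin_Smat_sq_add_inner_sq θs (p t)
  rw [hθs, hp1 t ht] at hframe
  rw [show w = fun s => 1 - ⟪θs, p s⟫ from funext hw]
  refine (((hasDerivAt_const t θs).inner ℝ (hp2 t ht)).const_sub 1).congr_deriv ?_
  simp only [inner_zero_left, add_zero, real_inner_smul_right]
  linear_combination -γ * hframe

open RealInnerProductSpace in
/-- Along solutions of the Lie-bracket averaged closed loop `ṗ = γ⟨ϑ⋆, Sp⟩Sp` on the unit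
circle, the potential `W(p) = 1 - ⟨ϑ⋆, p⟩` obeys the logistic-type decrease law
`Ẇ = -γ W (2 - W)`. -/
theorem circle_averaged_flow_potential_ode (γ : ℝ) (hγ : 0 < γ)
    (θs : EuclideanSpace ℝ (Fin 2)) (hθs : ‖θs‖ = 1)
    (I : Set ℝ) (hI : I.OrdConnected)
    (p : ℝ → EuclideanSpace ℝ (Fin 2))
    (hp1 : ∀ t ∈ I, ‖p t‖ = 1)
    (hp2 : ∀ t ∈ I, HasDerivAt p
      ((γ * ⟪θs, Matrix.toEuclideanLin Smat (p t)⟫) • Matrix.toEuclideanLin Smat (p t)) t)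
    (w : ℝ → ℝ) (hw : ∀ t, w t = 1 - ⟪θs, p t⟫) :
    ∀ t ∈ I, HasDerivAt w (-γ * w t * (2 - w t)) t :=
  circle_averaged_flow_potential_ode_general γ θs hθs I p hp1 hp2 w hw
end

section
/- Let γ > 0, let p⋆ ∈ ℝ³ with ‖p⋆‖ = 1, let e₁, e₂, e₃ be the standard basis of ℝ³, define bᵢ(p) := eᵢ − ⟨p, eᵢ⟩p, let I ⊆ ℝ be an interval, and let p : I → ℝ³ be differentiable with ‖p(t)‖ = 1 and p′(t) = γ Σᵢ₌₁³ ⟨p⋆, bᵢ(p(t))⟩ · bᵢ(p(t)) for all t ∈ I. Then w(t) := 1 − ⟨p(t), p⋆⟩ satisfies w′(t) = −γ · w(t) · (2 − w(t)) for all t ∈ I. -/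
/-! With `u := p⋆ - ⟪p⋆, p⟫ p` the tangential part of `p⋆` at `p`, one has `⟪p⋆, bᵢ(p)⟫ = ⟪u, eᵢ⟫`
and `⟪u, p⟫ = 0`, so by Parseval the averaged vector field is exactly `γ u`, the Riemannian
gradient flow of `⟪·, p⋆⟫` on the sphere. Hence `d/dt ⟪p, p⋆⟫ = γ ⟪p⋆, u⟫ = γ (1 - ⟪p, p⋆⟫²)`,
which is `γ W (2 - W)` for `W = 1 - ⟪p, p⋆⟫`. -/

open RealInnerProductSpace

section TangentProjection

variable {E : Type*} [NormedAddCommGroup E] [InnerProductSpace ℝ E]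

lemma inner_sub_inner_smul_right_eq (v x e : E) :
    ⟪v, e - ⟪x, e⟫ • x⟫ = ⟪v - ⟪v, x⟫ • x, e⟫ := by
  rw [inner_sub_right, inner_sub_left, real_inner_smul_right, real_inner_smul_left,
    real_inner_comm e x]
  ring

lemma inner_sub_inner_smul_self_left_eq_zero {x : E} (hx : ‖x‖ = 1) (v : E) :
    ⟪v - ⟪v, x⟫ • x, x⟫ = 0 := by
  rw [inner_sub_left, real_inner_smul_left, real_inner_self_eq_norm_sq, hx]
  ring

lemma inner_sub_inner_smul_left_self (v x : E) :
    ⟪v - ⟪v, x⟫ • x, v⟫ = ‖v‖ ^ 2 - ⟪v, x⟫ ^ 2 := by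
  rw [inner_sub_left, real_inner_smul_left, real_inner_self_eq_norm_sq, real_inner_comm v x]
  ring

theorem OrthonormalBasis.sum_inner_smul_sub_inner_smul {ι : Type*} [Fintype ι]
    (e : OrthonormalBasis ι ℝ E) {x : E} (hx : ‖x‖ = 1) (v : E) :
    ∑ i, ⟪v, e i - ⟪x, e i⟫ • x⟫ • (e i - ⟪x, e i⟫ • x) = v - ⟪v, x⟫ • x := by
  set u := v - ⟪v, x⟫ • x
  have hux : ⟪u, x⟫ = 0 := inner_sub_inner_smul_self_left_eq_zero hx v
  calc ∑ i, ⟪v, e i - ⟪x, e i⟫ • x⟫ • (e i - ⟪x, e i⟫ • x)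
      = ∑ i, ⟪u, e i⟫ • (e i - ⟪x, e i⟫ • x) := by simp only [u, inner_sub_inner_smul_right_eq]
    _ = ∑ i, ⟪e i, u⟫ • e i - (∑ i, ⟪u, e i⟫ * ⟪e i, x⟫) • x := by
        simp only [smul_sub, Finset.sum_sub_distrib, smul_smul, Finset.sum_smul,
          real_inner_comm (e _) x, real_inner_comm u]
    _ = u := by rw [e.sum_repr', e.sum_inner_mul_inner, hux, zero_smul, sub_zero]

end TangentProjection

theorem sphere_averaged_flow_potential_ode_general (γ : ℝ)
    (ps : EuclideanSpace ℝ (Fin 3)) (hps : ‖ps‖ = 1)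
    (b : EuclideanSpace ℝ (Fin 3) → Fin 3 → EuclideanSpace ℝ (Fin 3))
    (hb : ∀ x i, b x i = EuclideanSpace.single i (1 : ℝ)
      - ⟪x, EuclideanSpace.single i (1 : ℝ)⟫ • x)
    (I : Set ℝ)
    (p : ℝ → EuclideanSpace ℝ (Fin 3))
    (hp1 : ∀ t ∈ I, ‖p t‖ = 1)
    (hp2 : ∀ t ∈ I, HasDerivAt p (γ • ∑ i : Fin 3, (⟪ps, b (p t) i⟫) • b (p t) i) t)
    (w : ℝ → ℝ) (hw : ∀ t, w t = 1 - ⟪p t, ps⟫) :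
    ∀ t ∈ I, HasDerivAt w (-γ * w t * (2 - w t)) t := by
  intro t ht
  have hfield : ∑ i : Fin 3, ⟪ps, b (p t) i⟫ • b (p t) i = ps - ⟪ps, p t⟫ • p t := by
    simpa only [hb, EuclideanSpace.basisFun_apply] using
      (EuclideanSpace.basisFun (Fin 3) ℝ).sum_inner_smul_sub_inner_smul (hp1 t ht) ps
  have hderiv := ((hp2 t ht).inner ℝ (hasDerivAt_const t ps)).const_sub 1
  refine (funext hw ▸ hderiv).congr_deriv ?_
  rw [hw, hfield, inner_zero_right, zero_add, real_inner_smul_left, real_inner_comm ps (p t),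
    inner_sub_inner_smul_left_self, hps]
  ring

open RealInnerProductSpace in
/-- Along solutions of the Lie-bracket averaged closed loop
`ṗ = γ Σᵢ ⟨p⋆, bᵢ(p)⟩ bᵢ(p)`, with `bᵢ(p) = eᵢ - ⟨p, eᵢ⟩p`, on the unit sphere `S² ⊂ ℝ³`, the
potential `W(p) = 1 - ⟨p, p⋆⟩` obeys the logistic-type decrease law `Ẇ = -γ W (2 - W)`. -/
theorem sphere_averaged_flow_potential_ode (γ : ℝ) (hγ : 0 < γ)
    (ps : EuclideanSpace ℝ (Fin 3)) (hps : ‖ps‖ = 1)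
    (b : EuclideanSpace ℝ (Fin 3) → Fin 3 → EuclideanSpace ℝ (Fin 3))
    (hb : ∀ x i, b x i = EuclideanSpace.single i (1 : ℝ)
      - ⟪x, EuclideanSpace.single i (1 : ℝ)⟫ • x)
    (I : Set ℝ) (hI : I.OrdConnected)
    (p : ℝ → EuclideanSpace ℝ (Fin 3))
    (hp1 : ∀ t ∈ I, ‖p t‖ = 1)
    (hp2 : ∀ t ∈ I, HasDerivAt p (γ • ∑ i : Fin 3, (⟪ps, b (p t) i⟫) • b (p t) i) t)
    (w : ℝ → ℝ) (hw : ∀ t, w t = 1 - ⟪p t, ps⟫) :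
    ∀ t ∈ I, HasDerivAt w (-γ * w t * (2 - w t)) t :=
  sphere_averaged_flow_potential_ode_general γ ps hps b hb I p hp1 hp2 w hw
end
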